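/- Let (R, P, X) be a subproblem where R is a clique, every vertex of P ∪ X is adjacent to all of R, and every vertex adjacent to all of R lies in R ∪ P ∪ X. Let u ∈ P with unique neighbor v in P. If N(u) ∩ X = ∅ or N(v) ∩ X = ∅, then R ∪ {u, v} is a maximal clique of G. -/

import Mathlib

open SimpleGraph

/-- A maximal clique: a clique not properly contained in any other clique. -/
def MaximalClique {V : Type*} (G : SimpleGraph V) (S : Set V) : Prop :=
  G.IsClique S ∧ ∀ T : Set V, G.IsClique T → S ⊆ T → S = T

/-- The graph obtained from `G` by deleting vertex `u` (removing all its incident edges). -/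
def delVert {V : Type*} (G : SimpleGraph V) (u : V) : SimpleGraph V where
  Adj a b := G.Adj a b ∧ a ≠ u ∧ b ≠ u
  symm := ⟨fun a b h => ⟨h.1.symm, h.2.2, h.2.1⟩⟩
  loopless := ⟨fun a h => G.ne_of_adj h.1 rfl⟩

section

variable {V : Type*} {G : SimpleGraph V}

theorem SimpleGraph.IsClique.union_of_forall_adj {S T : Set V} (hS : G.IsClique S)
    (hT : G.IsClique T) (hST : ∀ a ∈ S, ∀ b ∈ T, G.Adj a b) : G.IsClique (S ∪ T) :=
  have := G.symm
  Set.pairwise_union_of_symm.2 ⟨hS, hT, fun a ha b hb _ => hST a ha b hb⟩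

theorem maximalClique_of_forall_adj_mem {S : Set V} (hS : G.IsClique S)
    (hmax : ∀ w, (∀ s ∈ S, G.Adj w s) → w ∈ S) : MaximalClique G S := by
  refine ⟨hS, fun T hT hST => hST.antisymm fun w hwT => ?_⟩
  by_contra hwS
  exact hwS (hmax w fun s hs => hT hwT (hST hs) (ne_of_mem_of_not_mem hs hwS).symm)

theorem notMem_of_adj_of_adj_of_neighborSet_inter_eq_empty {X : Set V} {u v w : V}
    (h : G.neighborSet u ∩ X = ∅ ∨ G.neighborSet v ∩ X = ∅) (hu : G.Adj u w) (hv : G.Adj v w) :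
    w ∉ X := by
  intro hwX
  rcases h with h | h
  exacts [h.subset ⟨hu, hwX⟩, h.subset ⟨hv, hwX⟩]

end

theorem stmt_11_general {V : Type*} (G : SimpleGraph V) (R P X : Set V)
    (hR : G.IsClique R)
    (hadj : ∀ x ∈ P ∪ X, ∀ r ∈ R, G.Adj x r)
    (hclosed : ∀ x, (∀ r ∈ R, G.Adj x r) → x ∈ R ∪ P ∪ X)
    (u v : V) (hu : u ∈ P)
    (hNu : G.neighborSet u ∩ P = {v})
    (hw : G.neighborSet u ∩ X = ∅ ∨ G.neighborSet v ∩ X = ∅) :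
    MaximalClique G (R ∪ {u, v}) := by
  have hv : v ∈ G.neighborSet u ∩ P := hNu ▸ rfl
  have hRuv : ∀ r ∈ R, ∀ x ∈ ({u, v} : Set V), G.Adj r x := by
    rintro r hr x (rfl | rfl)
    exacts [(hadj x (.inl hu) r hr).symm, (hadj x (.inl hv.2) r hr).symm]
  refine maximalClique_of_forall_adj_mem
    (hR.union_of_forall_adj (isClique_pair.2 fun _ => hv.1) hRuv) fun w hwS => ?_
  have hwu : G.Adj u w := (hwS u (by simp)).symm
  have hwv : G.Adj v w := (hwS v (by simp)).symm
  rcases hclosed w fun r hr => hwS r (.inl hr) with (hwR | hwP) | hwX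
  · exact .inl hwR
  · exact .inr (.inr (hNu ▸ ⟨hwu, hwP⟩))
  · exact absurd hwX (notMem_of_adj_of_adj_of_neighborSet_inter_eq_empty hw hwu hwv)

theorem stmt_11 {V : Type*} [Fintype V] (G : SimpleGraph V) (R P X : Set V)
    (hR : G.IsClique R)
    (hadj : ∀ x ∈ P ∪ X, ∀ r ∈ R, G.Adj x r)
    (hdisj : Disjoint P X)
    (hclosed : ∀ x, (∀ r ∈ R, G.Adj x r) → x ∈ R ∪ P ∪ X)
    (u v : V) (hu : u ∈ P)
    (hNu : G.neighborSet u ∩ P = {v})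
    (hw : G.neighborSet u ∩ X = ∅ ∨ G.neighborSet v ∩ X = ∅) :
    MaximalClique G (R ∪ {u, v}) :=
  stmt_11_general G R P X hR hadj hclosed u v hu hNu hw
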